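/- arXiv:1910.00502 — 2 statements merged into one kernel-verified Lean document; each statement's English description precedes it below -/
import Mathlib

section
/- For every finite set Δ of points in (2ℤ)^n, there exists a unique maximal Δ-mediated set Δ*, i.e., a Δ-mediated set that contains every Δ-mediated set, and it satisfies Δ ∪ Mid(Δ) ⊆ Δ* ⊆ conv(Δ) ∩ ℤ^n. -/
open Set

/-- Cast an integer lattice point to a real point. -/
def toR {n : ℕ} (p : Fin n → ℤ) : Fin n → ℝ := fun i => (p i : ℝ)

/-- A lattice point all of whose coordinates are even, i.e., a point of `(2ℤ)^n`. -/
def Even2 {n : ℕ} (p : Fin n → ℤ) : Prop := ∀ i, 2 ∣ p i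

/-- The set of midpoints of pairs of distinct even points of `L`. -/
def Mid2 {n : ℕ} (L : Set (Fin n → ℤ)) : Set (Fin n → ℤ) :=
  {m | ∃ s ∈ L, ∃ t ∈ L, Even2 s ∧ Even2 t ∧ s ≠ t ∧ s + t = 2 • m}

/-- `L ⊆ ℤ^n` is `Δ`-mediated if it contains `Δ` and every element of `L`
is a midpoint of two distinct even points of `L` or belongs to `Δ`. -/
def IsMediated {n : ℕ} (Δ L : Set (Fin n → ℤ)) : Prop :=
  L.Finite ∧ Δ ⊆ L ∧ L ⊆ Mid2 L ∪ Δ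

/-- The lattice points of the convex hull `conv(Δ) ∩ ℤ^n`. -/
def convZ {n : ℕ} (Δ : Set (Fin n → ℤ)) : Set (Fin n → ℤ) :=
  {p | toR p ∈ convexHull ℝ (toR '' Δ)}

/-!
Every point of a `Δ`-mediated set `L` that is not in `Δ` is the midpoint of two distinct points
of `L`, so it is not an extreme point of `conv L`. By Krein–Milman `conv L` is then contained in
`conv Δ`, so all `Δ`-mediated sets lie in the finite set `conv(Δ) ∩ ℤ^n`. Hence their union is
finite, and it is again `Δ`-mediated because `Mid2` is monotone: this union is `Δ*`.
-/

variable {n : ℕ}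

lemma toR_injective : Function.Injective (toR (n := n)) := fun p q h =>
  funext fun i => by simpa [toR] using congrFun h i

lemma mid2_mono {L L' : Set (Fin n → ℤ)} (h : L ⊆ L') : Mid2 L ⊆ Mid2 L' := by
  rintro m ⟨s, hs, t, ht, hes, het, hst, hsum⟩
  exact ⟨s, h hs, t, h ht, hes, het, hst, hsum⟩

lemma add_apply_eq_two_mul_of_add_eq_two_nsmul {s t m : Fin n → ℤ} (h : s + t = 2 • m)
    (i : Fin n) : s i + t i = 2 * m i := by
  simpa [two_nsmul, two_mul] using congrFun h i

lemma mid2_finite {Δ : Set (Fin n → ℤ)} (h : Δ.Finite) : (Mid2 Δ).Finite := by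
  refine ((h.prod h).image fun q i => (q.1 i + q.2 i) / 2).subset ?_
  rintro m ⟨s, hs, t, ht, -, -, -, hsum⟩
  refine ⟨(s, t), ⟨hs, ht⟩, funext fun i => ?_⟩
  have := add_apply_eq_two_mul_of_add_eq_two_nsmul hsum i
  dsimp only
  omega

lemma convZ_finite {Δ : Set (Fin n → ℤ)} (h : Δ.Finite) : (convZ Δ).Finite := by
  obtain ⟨C, hC⟩ := (isBounded_convexHull.2 (h.image toR).isBounded).exists_norm_le
  refine (finite_Icc (fun _ => -⌈C⌉) (fun _ => ⌈C⌉)).subset fun p hp => ?_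
  have hcoord (i : Fin n) : |p i| ≤ ⌈C⌉ := by
    have : |(p i : ℝ)| ≤ C := (norm_le_pi_norm (toR p) i).trans (hC _ hp)
    exact_mod_cast this.trans (Int.le_ceil C)
  exact ⟨fun i => (abs_le.1 (hcoord i)).1, fun i => (abs_le.1 (hcoord i)).2⟩

lemma toR_mem_openSegment_of_add_eq_two_nsmul {s t m : Fin n → ℤ} (h : s + t = 2 • m) :
    toR m ∈ openSegment ℝ (toR s) (toR t) := by
  refine ⟨1 / 2, 1 / 2, by norm_num, by norm_num, by norm_num, funext fun i => ?_⟩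
  have : (s i : ℝ) + t i = 2 * m i := by exact_mod_cast add_apply_eq_two_mul_of_add_eq_two_nsmul h i
  simp only [Pi.add_apply, Pi.smul_apply, smul_eq_mul, toR]
  linarith

lemma extremePoints_convexHull_subset_of_subset_mid2_union {Δ L : Set (Fin n → ℤ)}
    (h : L ⊆ Mid2 L ∪ Δ) : (convexHull ℝ (toR '' L)).extremePoints ℝ ⊆ toR '' Δ := by
  intro x hx
  obtain ⟨p, hp, rfl⟩ := extremePoints_convexHull_subset hx
  rcases h hp with ⟨s, hs, t, ht, -, -, hst, hsum⟩ | hpΔ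
  · have hseg := toR_mem_openSegment_of_add_eq_two_nsmul hsum
    have hends := (mem_extremePoints.1 hx).2 _ (subset_convexHull ℝ _ ⟨s, hs, rfl⟩) _
      (subset_convexHull ℝ _ ⟨t, ht, rfl⟩) hseg
    exact absurd (toR_injective (hends.1.trans hends.2.symm)) hst
  · exact ⟨p, hpΔ, rfl⟩

lemma IsMediated.subset_convZ {Δ L : Set (Fin n → ℤ)} (hΔ : Δ.Finite) (hL : IsMediated Δ L) :
    L ⊆ convZ Δ := by
  obtain ⟨hLfin, -, hLmid⟩ := hL
  have hK : IsCompact (convexHull ℝ (toR '' L)) := (hLfin.image toR).isCompact_convexHull ℝ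
  have hsub : convexHull ℝ (toR '' L) ⊆ convexHull ℝ (toR '' Δ) :=
    calc convexHull ℝ (toR '' L)
        = closure (convexHull ℝ ((convexHull ℝ (toR '' L)).extremePoints ℝ)) :=
          (closure_convexHull_extremePoints hK (convex_convexHull ℝ _)).symm
      _ ⊆ closure (convexHull ℝ (toR '' Δ)) := closure_mono <| convexHull_mono <|
          extremePoints_convexHull_subset_of_subset_mid2_union hLmid
      _ = convexHull ℝ (toR '' Δ) := ((hΔ.image toR).isClosed_convexHull ℝ).closure_eq
  exact fun p hp => hsub (subset_convexHull ℝ _ ⟨p, hp, rfl⟩)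

lemma isMediated_self {Δ : Set (Fin n → ℤ)} (h : Δ.Finite) : IsMediated Δ Δ :=
  ⟨h, subset_rfl, subset_union_right⟩

lemma isMediated_union_mid2 {Δ : Set (Fin n → ℤ)} (h : Δ.Finite) : IsMediated Δ (Δ ∪ Mid2 Δ) :=
  ⟨h.union (mid2_finite h), subset_union_left,
    union_subset subset_union_right ((mid2_mono subset_union_left).trans subset_union_left)⟩

lemma isMediated_sUnion {Δ : Set (Fin n → ℤ)} {𝓛 : Set (Set (Fin n → ℤ))}
    (hne : 𝓛.Nonempty) (hfin : (⋃₀ 𝓛).Finite) (h𝓛 : ∀ L ∈ 𝓛, IsMediated Δ L) :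
    IsMediated Δ (⋃₀ 𝓛) := by
  obtain ⟨L₀, hL₀⟩ := hne
  refine ⟨hfin, (h𝓛 L₀ hL₀).2.1.trans (subset_sUnion_of_mem hL₀), sUnion_subset fun L hL => ?_⟩
  exact (h𝓛 L hL).2.2.trans (union_subset_union_left Δ (mid2_mono (subset_sUnion_of_mem hL)))

def maxMediated (Δ : Set (Fin n → ℤ)) : Set (Fin n → ℤ) :=
  ⋃₀ {L | IsMediated Δ L}

lemma IsMediated.subset_maxMediated {Δ L : Set (Fin n → ℤ)} (hL : IsMediated Δ L) :
    L ⊆ maxMediated Δ :=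
  subset_sUnion_of_mem hL

lemma maxMediated_subset_convZ {Δ : Set (Fin n → ℤ)} (h : Δ.Finite) :
    maxMediated Δ ⊆ convZ Δ :=
  sUnion_subset fun _ hL => IsMediated.subset_convZ h hL

lemma isMediated_maxMediated {Δ : Set (Fin n → ℤ)} (h : Δ.Finite) :
    IsMediated Δ (maxMediated Δ) :=
  isMediated_sUnion ⟨Δ, isMediated_self h⟩ ((convZ_finite h).subset (maxMediated_subset_convZ h))
    fun _ hL => hL

theorem exists_unique_maximal_mediated_set_general {n : ℕ} (Δ : Set (Fin n → ℤ))
    (hfin : Δ.Finite) :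
    ∃! M : Set (Fin n → ℤ),
      (IsMediated Δ M ∧ ∀ L, IsMediated Δ L → L ⊆ M) ∧
        Δ ∪ Mid2 Δ ⊆ M ∧ M ⊆ convZ Δ := by
  refine ⟨maxMediated Δ, ⟨⟨isMediated_maxMediated hfin, fun _ hL => hL.subset_maxMediated⟩,
    (isMediated_union_mid2 hfin).subset_maxMediated, maxMediated_subset_convZ hfin⟩, ?_⟩
  rintro M ⟨⟨hM, hmax⟩, -⟩
  exact hM.subset_maxMediated.antisymm (hmax _ (isMediated_maxMediated hfin))

/-- For every finite even set `Δ ⊆ (2ℤ)^n` there is a unique maximal `Δ`-mediated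
set `Δ*`, and it satisfies `Δ ∪ Mid(Δ) ⊆ Δ* ⊆ conv(Δ) ∩ ℤ^n`. -/
theorem exists_unique_maximal_mediated_set {n : ℕ} (Δ : Set (Fin n → ℤ))
    (hfin : Δ.Finite) (heven : ∀ p ∈ Δ, Even2 p) :
    ∃! M : Set (Fin n → ℤ),
      (IsMediated Δ M ∧ ∀ L, IsMediated Δ L → L ⊆ M) ∧
        Δ ∪ Mid2 Δ ⊆ M ∧ M ⊆ convZ Δ :=
  exists_unique_maximal_mediated_set_general Δ hfin
end

section
/- For the Motzkin simplex Δ₁ = {(0,0), (2,4), (4,2)}, the maximal Δ₁-mediated set equals {(0,0), (1,2), (2,1), (2,4), (3,3), (4,2)}, which equals Δ₁ ∪ Mid(Δ₁); i.e., Δ₁ is an M-simplex. -/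
/-!
Let `Δ₁ = {(0,0), (2,4), (4,2)}`. If a linear functional `a ⬝ᵥ ·` had its minimum over a finite
`Δ`-mediated set `M` outside `Δ`, take a minimiser of largest Euclidean norm: it is the midpoint of
two distinct points of `M`, both again minimisers, and by strict convexity of the squared norm one
of them is longer. So every `Δ₁`-mediated set lies in the triangle `conv Δ₁`. The even lattice
points of that triangle are `Δ₁` and `(2,2)`, and `(2,2)` is not the midpoint of two distinct even
points of the triangle, so it is never in a mediated set. Hence the even points of `Δ₁*` lie in
`Δ₁`, which gives `Δ₁* ⊆ Δ₁ ∪ Mid(Δ₁)`; conversely `Δ₁ ∪ Mid(Δ₁)` is itself `Δ₁`-mediated.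
-/

open Set

open Matrix

section Mediated

variable {n : ℕ} {Δ M A B : Set (Fin n → ℤ)}

theorem two_nsmul_injective : Function.Injective fun m : Fin n → ℤ => 2 • m :=
  fun _ _ h => funext fun i => by simpa using congrFun h i

theorem Mid2_subset_Mid2 (h : ∀ p ∈ A, Even2 p → p ∈ B) : Mid2 A ⊆ Mid2 B :=
  fun _ ⟨s, hs, t, ht, es, et, hst, hm⟩ => ⟨s, h s hs es, t, h t ht et, es, et, hst, hm⟩

theorem Mid2_mono (h : A ⊆ B) : Mid2 A ⊆ Mid2 B :=
  Mid2_subset_Mid2 fun _ hp _ => h hp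

theorem Set.Finite.Mid2 (h : A.Finite) : (Mid2 A).Finite :=
  ((h.add h).preimage two_nsmul_injective.injOn).subset
    fun _ ⟨s, hs, t, ht, _, _, _, hm⟩ => ⟨s, hs, t, ht, hm⟩

theorem isMediated_union_Mid2 (h : Δ.Finite) : IsMediated Δ (Δ ∪ Mid2 Δ) :=
  ⟨h.union h.Mid2, subset_union_left,
    fun _ hp => hp.elim Or.inr fun hm => Or.inl (Mid2_mono subset_union_left hm)⟩

theorem IsMediated.subset_union_Mid2 (h : IsMediated Δ M) (heven : ∀ p ∈ M, Even2 p → p ∈ Δ) :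
    M ⊆ Δ ∪ Mid2 Δ :=
  fun _ hp => (h.2.2 hp).elim (fun hm => Or.inr (Mid2_subset_Mid2 heven hm)) Or.inl

theorem IsMediated.eq_union_Mid2 (h : IsMediated Δ M) (hmax : ∀ L, IsMediated Δ L → L ⊆ M)
    (heven : ∀ p ∈ M, Even2 p → p ∈ Δ) : M = Δ ∪ Mid2 Δ :=
  (h.subset_union_Mid2 heven).antisymm (hmax _ (isMediated_union_Mid2 (h.1.subset h.2.1)))

theorem dotProduct_self_lt_or_of_add_eq_two_nsmul {s t q : Fin n → ℤ} (hst : s ≠ t)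
    (h : s + t = 2 • q) : q ⬝ᵥ q < s ⬝ᵥ s ∨ q ⬝ᵥ q < t ⬝ᵥ t := by
  have hpos : 0 < (s - t) ⬝ᵥ (s - t) :=
    (Finset.sum_nonneg fun i _ => mul_self_nonneg _).lt_of_ne'
      (dotProduct_self_eq_zero.not.mpr (sub_ne_zero.mpr hst))
  have parallelogram : (s - t) ⬝ᵥ (s - t) + (s + t) ⬝ᵥ (s + t) = 2 * (s ⬝ᵥ s + t ⬝ᵥ t) := by
    simp only [add_dotProduct, dotProduct_add, sub_dotProduct, dotProduct_sub, dotProduct_comm t s]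
    ring
  have hq : (s + t) ⬝ᵥ (s + t) = 4 * (q ⬝ᵥ q) := by
    rw [h, smul_dotProduct, dotProduct_smul, smul_smul, nsmul_eq_mul]
    norm_num
  by_contra! hle
  linarith [hle.1, hle.2]

theorem IsMediated.exists_mem_forall_dotProduct_le (h : IsMediated Δ M) (hne : M.Nonempty)
    (a : Fin n → ℤ) : ∃ d ∈ Δ, ∀ p ∈ M, a ⬝ᵥ d ≤ a ⬝ᵥ p := by
  obtain ⟨q, hqM, hq⟩ := M.exists_min_image (fun p => toLex (a ⬝ᵥ p, -(p ⬝ᵥ p))) h.1 hne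
  simp only [Prod.Lex.toLex_le_toLex'] at hq
  refine ⟨q, (h.2.2 hqM).resolve_left ?_, fun p hp => (hq p hp).1⟩
  rintro ⟨s, hs, t, ht, -, -, hst, hsum⟩
  have hlin : a ⬝ᵥ s + a ⬝ᵥ t = 2 * a ⬝ᵥ q := by
    rw [← dotProduct_add, hsum, dotProduct_smul, nsmul_eq_mul, Nat.cast_ofNat]
  have hqs := hq s hs
  have hqt := hq t ht
  have hlonger := dotProduct_self_lt_or_of_add_eq_two_nsmul hst hsum
  omega

theorem IsMediated.le_dotProduct (h : IsMediated Δ M) {a : Fin n → ℤ} {c : ℤ}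
    (hΔ : ∀ d ∈ Δ, c ≤ a ⬝ᵥ d) {p : Fin n → ℤ} (hp : p ∈ M) : c ≤ a ⬝ᵥ p :=
  let ⟨d, hd, hmin⟩ := h.exists_mem_forall_dotProduct_le ⟨p, hp⟩ a
  (hΔ d hd).trans (hmin p hp)

end Mediated

local notation "Δ₁" => ({![0,0], ![2,4], ![4,2]} : Set (Fin 2 → ℤ))

section Motzkin

variable {M : Set (Fin 2 → ℤ)}

theorem motzkin_triangle_of_isMediated (h : IsMediated Δ₁ M) {p : Fin 2 → ℤ} (hp : p ∈ M) :
    p 1 ≤ 2 * p 0 ∧ p 0 ≤ 2 * p 1 ∧ p 0 + p 1 ≤ 6 := by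
  have h₁ := h.le_dotProduct (a := ![2, -1]) (c := 0) (by simp [dotProduct]) hp
  have h₂ := h.le_dotProduct (a := ![-1, 2]) (c := 0) (by simp [dotProduct]) hp
  have h₃ := h.le_dotProduct (a := ![-1, -1]) (c := -6) (by simp [dotProduct]) hp
  simp [dotProduct, Fin.sum_univ_two] at h₁ h₂ h₃
  omega

theorem mem_or_eq_of_even_of_motzkin_triangle {p : Fin 2 → ℤ}
    (hT : p 1 ≤ 2 * p 0 ∧ p 0 ≤ 2 * p 1 ∧ p 0 + p 1 ≤ 6) (he : Even2 p) :
    p ∈ Δ₁ ∨ p = ![2, 2] := by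
  have := he 0
  have := he 1
  simp [funext_iff, Fin.forall_fin_two]
  omega

theorem two_two_not_mem_of_isMediated (h : IsMediated Δ₁ M) : ![2, 2] ∉ M := by
  intro hmem
  rcases h.2.2 hmem with ⟨s, hs, t, ht, es, et, hst, hsum⟩ | hΔ
  · have := motzkin_triangle_of_isMediated h hs
    have := motzkin_triangle_of_isMediated h ht
    have := es 0; have := es 1; have := et 0; have := et 1
    have h0 := congrFun hsum 0
    have h1 := congrFun hsum 1
    simp [funext_iff, Fin.forall_fin_two] at hst h0 h1
    omega
  · simp [funext_iff, Fin.forall_fin_two] at hΔ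

theorem Mid2_motzkin : Mid2 Δ₁ = {![1, 2], ![2, 1], ![3, 3]} := by
  ext m
  constructor
  · rintro ⟨s, hs, t, ht, -, -, hst, hsum⟩
    have h0 := congrFun hsum 0
    have h1 := congrFun hsum 1
    rcases hs with rfl | rfl | rfl <;> rcases ht with rfl | rfl | rfl <;>
      simp [funext_iff, Fin.forall_fin_two] at hst h0 h1 ⊢ <;> omega
  · have even : ∀ p ∈ Δ₁, Even2 p := by
      simp [Even2, Fin.forall_fin_two]
    rintro (rfl | rfl | rfl)
    · exact ⟨![0, 0], by simp, ![2, 4], by simp, even _ (by simp), even _ (by simp), by simp, by simp⟩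
    · exact ⟨![0, 0], by simp, ![4, 2], by simp, even _ (by simp), even _ (by simp), by simp, by simp⟩
    · exact ⟨![2, 4], by simp, ![4, 2], by simp, even _ (by simp), even _ (by simp), by simp, by simp⟩

end Motzkin

/-- The Motzkin simplex `Δ₁ = {(0,0),(2,4),(4,2)}` is an M-simplex: its maximal
mediated set is `{(0,0),(1,2),(2,1),(2,4),(3,3),(4,2)} = Δ₁ ∪ Mid(Δ₁)`. -/
theorem motzkin_M_simplex (M : Set (Fin 2 → ℤ))
    (hmed : IsMediated ({![0,0], ![2,4], ![4,2]} : Set (Fin 2 → ℤ)) M)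
    (hmax : ∀ L, IsMediated ({![0,0], ![2,4], ![4,2]} : Set (Fin 2 → ℤ)) L → L ⊆ M) :
    M = ({![0,0], ![1,2], ![2,1], ![2,4], ![3,3], ![4,2]} : Set (Fin 2 → ℤ)) ∧
    M = ({![0,0], ![2,4], ![4,2]} : Set (Fin 2 → ℤ)) ∪
          Mid2 ({![0,0], ![2,4], ![4,2]} : Set (Fin 2 → ℤ)) := by
  have heven : ∀ p ∈ M, Even2 p → p ∈ Δ₁ :=
    fun p hp he =>
      (mem_or_eq_of_even_of_motzkin_triangle (motzkin_triangle_of_isMediated hmed hp) he).resolve_right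
        fun h22 => two_two_not_mem_of_isMediated hmed (h22 ▸ hp)
  have hM := hmed.eq_union_Mid2 hmax heven
  refine ⟨?_, hM⟩
  rw [hM, Mid2_motzkin]
  ext p
  simp only [mem_union, mem_insert_iff, mem_singleton_iff]
  tauto
end
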